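/- For κ > 0 set r₀(κ) := √(1+κ²) − κ ∈ (0,1). Then for every κ > 0 the quantity κ²r² − (1−r²)²/4 is strictly positive for r ∈ (r₀(κ), 1), the improper integral h(κ) := ∫_{r₀(κ)}^{1} dr / √(κ²r² − (1−r²)²/4) converges, and the function κ ↦ h(κ) is a bijection from (0, ∞) onto (0, π/2). -/

import Mathlib

open Set MeasureTheory

/-- The half-height of the vertical catenoid with flux parameter κ. -/
noncomputable def catenoidHalfHeight (κ : ℝ) : ℝ :=
  ∫ r in Set.Ioo (Real.sqrt (1 + κ ^ 2) - κ) 1,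
    1 / Real.sqrt (κ ^ 2 * r ^ 2 - (1 - r ^ 2) ^ 2 / 4)

/-!
The substitution `r = exp (-arsinh (κ sin φ))`, i.e. `κ sin φ = (1 - r²) / (2r)`, maps `(0, π/2)`
decreasingly onto `(r₀(κ), 1)`. It turns the radicand into `(κ r cos φ)²` and has
`|dr/dφ| = κ r cos φ / √(1 + κ² sin² φ)`, so the half-height equals
`∫₀^{π/2} dφ / √(1 + κ² sin² φ)`. This integral is continuous and strictly decreasing in `κ ≥ 0`,
equals `π/2` at `κ = 0` and tends to `0` as `κ → ∞` by dominated convergence.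
-/

open Filter Topology Real

theorem StrictAntiOn.bijOn_Ioi_Ioo {α β : Type*} [ConditionallyCompleteLinearOrder α]
    [TopologicalSpace α] [OrderTopology α] [DenselyOrdered α] [NoMaxOrder α]
    [LinearOrder β] [TopologicalSpace β] [OrderTopology β]
    {f : α → β} {a : α} {c : β} (hanti : StrictAntiOn f (Ici a))
    (hcont : ContinuousOn f (Ici a)) (hlim : Tendsto f atTop (𝓝 c)) :
    BijOn f (Ioi a) (Ioo c (f a)) := by
  have hc_le : ∀ x ∈ Ici a, c ≤ f x := fun x hx =>
    le_of_tendsto hlim <| (eventually_ge_atTop x).mono fun y hxy =>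
      hanti.antitoneOn hx (mem_Ici.2 (le_trans hx hxy)) hxy
  refine ⟨fun x hx => ⟨?_, hanti le_rfl (mem_Ici_of_Ioi hx) hx⟩,
    hanti.injOn.mono Ioi_subset_Ici_self, fun y hy => ?_⟩
  · obtain ⟨z, hxz⟩ := exists_gt x
    have hz : z ∈ Ici a := (hx.trans hxz).le
    exact (hc_le z hz).trans_lt (hanti (mem_Ici_of_Ioi hx) hz hxz)
  · obtain ⟨b, hby, hab⟩ :=
      ((hlim.eventually (gt_mem_nhds hy.1)).and (eventually_ge_atTop a)).exists
    obtain ⟨x, hx, rfl⟩ := intermediate_value_Icc' hab (hcont.mono Icc_subset_Ici_self)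
      ⟨hby.le, hy.2.le⟩
    exact ⟨x, lt_of_le_of_ne hx.1 (by rintro rfl; exact hy.2.ne rfl), rfl⟩

theorem Real.exp_neg_arsinh (x : ℝ) : exp (-arsinh x) = √(1 + x ^ 2) - x := by
  rw [exp_neg, exp_arsinh]
  refine inv_eq_of_mul_eq_one_right ?_
  nlinarith [sq_sqrt (by positivity : (0 : ℝ) ≤ 1 + x ^ 2)]

theorem Real.one_sub_exp_neg_arsinh_sq (x : ℝ) :
    1 - exp (-arsinh x) ^ 2 = 2 * x * exp (-arsinh x) := by
  have hsinh := sinh_arsinh x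
  rw [sinh_eq] at hsinh
  have hexp : exp (arsinh x) * exp (-arsinh x) = 1 := by rw [← exp_add, add_neg_cancel, exp_zero]
  linear_combination (2 * exp (-arsinh x)) * hsinh - hexp

namespace Catenoid

noncomputable def radius (κ φ : ℝ) : ℝ := exp (-arsinh (κ * sin φ))

variable {κ : ℝ}

theorem radius_zero (κ : ℝ) : radius κ 0 = 1 := by simp [radius]

theorem radius_pi_div_two (κ : ℝ) : radius κ (π / 2) = √(1 + κ ^ 2) - κ := by
  simp [radius, exp_neg_arsinh]

theorem continuous_radius (κ : ℝ) : Continuous (radius κ) :=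
  continuous_exp.comp ((continuous_const.mul continuous_sin).arsinh.neg)

theorem strictAntiOn_radius (hκ : 0 < κ) : StrictAntiOn (radius κ) (Icc 0 (π / 2)) := by
  intro φ hφ ψ hψ hφψ
  have hsin : sin φ < sin ψ := strictMonoOn_sin
    ⟨by linarith [pi_pos, hφ.1], hφ.2⟩ ⟨by linarith [pi_pos, hψ.1], hψ.2⟩ hφψ
  exact exp_lt_exp.2 <| neg_lt_neg <| arsinh_strictMono <| mul_lt_mul_of_pos_left hsin hκ

theorem injOn_radius (hκ : 0 < κ) : InjOn (radius κ) (Ioo 0 (π / 2)) :=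
  (strictAntiOn_radius hκ).injOn.mono Ioo_subset_Icc_self

theorem image_radius (hκ : 0 < κ) :
    radius κ '' Ioo 0 (π / 2) = Ioo (√(1 + κ ^ 2) - κ) 1 := by
  rw [(continuous_radius κ).continuousOn.image_Ioo_of_strictAntiOn (by positivity)
    (strictAntiOn_radius hκ), radius_zero, radius_pi_div_two]

theorem hasDerivAt_radius (κ φ : ℝ) :
    HasDerivAt (radius κ)
      (-(radius κ φ * κ * cos φ / √(1 + (κ * sin φ) ^ 2))) φ := by
  convert (((hasDerivAt_sin φ).const_mul κ).arsinh.neg).exp using 1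
  · rfl
  · simp only [radius, Pi.neg_apply, smul_eq_mul]
    ring

theorem discriminant_radius (κ φ : ℝ) :
    κ ^ 2 * radius κ φ ^ 2 - (1 - radius κ φ ^ 2) ^ 2 / 4 = (κ * radius κ φ * cos φ) ^ 2 := by
  rw [radius, one_sub_exp_neg_arsinh_sq]
  linear_combination -(κ * exp (-arsinh (κ * sin φ))) ^ 2 * sin_sq_add_cos_sq φ

theorem discriminant_pos (hκ : 0 < κ) {r : ℝ} (hr : r ∈ Ioo (√(1 + κ ^ 2) - κ) 1) :
    0 < κ ^ 2 * r ^ 2 - (1 - r ^ 2) ^ 2 / 4 := by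
  obtain ⟨φ, hφ, rfl⟩ := (image_radius hκ).symm ▸ hr
  have hcos : 0 < cos φ := cos_pos_of_mem_Ioo ⟨by linarith [pi_pos, hφ.1], hφ.2⟩
  have hr : 0 < radius κ φ := exp_pos _
  rw [discriminant_radius]
  positivity

noncomputable def heightIntegrand (κ φ : ℝ) : ℝ := (√(1 + (κ * sin φ) ^ 2))⁻¹

theorem heightIntegrand_pos (κ φ : ℝ) : 0 < heightIntegrand κ φ :=
  inv_pos.2 <| sqrt_pos.2 <| by positivity

theorem heightIntegrand_le_one (κ φ : ℝ) : heightIntegrand κ φ ≤ 1 :=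
  inv_le_one_of_one_le₀ <| one_le_sqrt.2 <| le_add_of_nonneg_right (sq_nonneg _)

theorem continuous_heightIntegrand : Continuous (Function.uncurry heightIntegrand) :=
  (continuous_sqrt.comp (by fun_prop)).inv₀ fun _ => (sqrt_pos.2 (by positivity)).ne'

theorem antitoneOn_heightIntegrand (φ : ℝ) :
    AntitoneOn (fun κ => heightIntegrand κ φ) (Ici 0) := by
  intro a ha b _ hab
  simp only [heightIntegrand, mul_pow]
  gcongr

theorem heightIntegrand_pi_div_two (κ : ℝ) : heightIntegrand κ (π / 2) = (√(1 + κ ^ 2))⁻¹ := by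
  simp [heightIntegrand]

theorem tendsto_heightIntegrand_atTop {φ : ℝ} (hφ : 0 < sin φ) :
    Tendsto (fun κ => heightIntegrand κ φ) atTop (𝓝 0) :=
  tendsto_inv_atTop_zero.comp <| tendsto_sqrt_atTop.comp <| tendsto_atTop_add_const_left _ _ <|
    (tendsto_pow_atTop two_ne_zero).comp (tendsto_id.atTop_mul_const hφ)

noncomputable def angularHalfHeight (κ : ℝ) : ℝ := ∫ φ in 0..π / 2, heightIntegrand κ φ

theorem angularHalfHeight_zero : angularHalfHeight 0 = π / 2 := by
  simp [angularHalfHeight, heightIntegrand]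

theorem continuous_angularHalfHeight : Continuous angularHalfHeight :=
  intervalIntegral.continuous_parametric_intervalIntegral_of_continuous'
    continuous_heightIntegrand 0 (π / 2)

theorem strictAntiOn_angularHalfHeight : StrictAntiOn angularHalfHeight (Ici 0) := by
  intro a ha b hb hab
  refine intervalIntegral.integral_lt_integral_of_continuousOn_of_le_of_exists_lt
    (by positivity) (continuous_heightIntegrand.uncurry_left b).continuousOn
    (continuous_heightIntegrand.uncurry_left a).continuousOn
    (fun φ _ => antitoneOn_heightIntegrand φ ha hb hab.le) ⟨π / 2, ⟨by positivity, le_rfl⟩, ?_⟩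
  rw [heightIntegrand_pi_div_two, heightIntegrand_pi_div_two]
  gcongr

theorem tendsto_angularHalfHeight_atTop : Tendsto angularHalfHeight atTop (𝓝 0) := by
  have := intervalIntegral.tendsto_integral_filter_of_dominated_convergence (μ := volume)
    (a := 0) (b := π / 2) (l := atTop) (F := heightIntegrand) (f := 0) (fun _ => 1)
    (Eventually.of_forall fun κ =>
      (continuous_heightIntegrand.uncurry_left κ).aestronglyMeasurable)
    (Eventually.of_forall fun κ => ae_of_all _ fun φ _ => by
      rw [norm_of_nonneg (heightIntegrand_pos κ φ).le]; exact heightIntegrand_le_one κ φ)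
    intervalIntegrable_const
    (ae_of_all _ fun φ hφ => tendsto_heightIntegrand_atTop ?_)
  · simp only [Pi.zero_apply, intervalIntegral.integral_zero] at this
    exact this
  · rw [uIoc_of_le (by positivity)] at hφ
    exact sin_pos_of_pos_of_lt_pi hφ.1 (hφ.2.trans_lt (by linarith [pi_pos]))

theorem abs_deriv_radius_mul (hκ : 0 < κ) {φ : ℝ} (hφ : φ ∈ Ioo 0 (π / 2)) :
    |-(radius κ φ * κ * cos φ / √(1 + (κ * sin φ) ^ 2))| *
        (1 / √(κ ^ 2 * radius κ φ ^ 2 - (1 - radius κ φ ^ 2) ^ 2 / 4)) =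
      heightIntegrand κ φ := by
  have hcos : 0 < cos φ := cos_pos_of_mem_Ioo ⟨by linarith [pi_pos, hφ.1], hφ.2⟩
  have hr : 0 < radius κ φ := exp_pos _
  rw [discriminant_radius, sqrt_sq (by positivity), abs_neg, abs_of_pos (by positivity),
    heightIntegrand]
  field_simp

theorem integrableOn_inv_sqrt_discriminant (hκ : 0 < κ) :
    IntegrableOn (fun r => 1 / √(κ ^ 2 * r ^ 2 - (1 - r ^ 2) ^ 2 / 4))
      (Ioo (√(1 + κ ^ 2) - κ) 1) := by
  rw [← image_radius hκ, integrableOn_image_iff_integrableOn_abs_deriv_smul measurableSet_Ioo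
    (fun φ _ => (hasDerivAt_radius κ φ).hasDerivWithinAt) (injOn_radius hκ)]
  exact ((continuous_heightIntegrand.uncurry_left κ).integrableOn_Icc.mono_set
    Ioo_subset_Icc_self).congr_fun (fun φ hφ => (abs_deriv_radius_mul hκ hφ).symm)
    measurableSet_Ioo

theorem catenoidHalfHeight_eq_angularHalfHeight (hκ : 0 < κ) :
    catenoidHalfHeight κ = angularHalfHeight κ := by
  rw [catenoidHalfHeight, angularHalfHeight, intervalIntegral.integral_of_le (by positivity),
    integral_Ioc_eq_integral_Ioo, ← image_radius hκ,
    integral_image_eq_integral_abs_deriv_smul measurableSet_Ioo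
      (fun φ _ => (hasDerivAt_radius κ φ).hasDerivWithinAt) (injOn_radius hκ)]
  exact setIntegral_congr_fun measurableSet_Ioo fun φ hφ => abs_deriv_radius_mul hκ hφ

end Catenoid

open Catenoid in
/-- The correspondence between the flux parameter κ and the half-height h of
the vertical catenoid is a bijection from (0,∞) onto (0, π/2). -/
theorem catenoid_height_bijection :
    (∀ κ : ℝ, 0 < κ →
      (Real.sqrt (1 + κ ^ 2) - κ ∈ Set.Ioo (0 : ℝ) 1) ∧
      (∀ r ∈ Set.Ioo (Real.sqrt (1 + κ ^ 2) - κ) 1,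
        0 < κ ^ 2 * r ^ 2 - (1 - r ^ 2) ^ 2 / 4) ∧
      IntegrableOn (fun r => 1 / Real.sqrt (κ ^ 2 * r ^ 2 - (1 - r ^ 2) ^ 2 / 4))
        (Set.Ioo (Real.sqrt (1 + κ ^ 2) - κ) 1) volume) ∧
    Set.BijOn catenoidHalfHeight (Set.Ioi 0) (Set.Ioo 0 (Real.pi / 2)) := by
  refine ⟨fun κ hκ => ⟨?_, fun r hr => discriminant_pos hκ hr,
    integrableOn_inv_sqrt_discriminant hκ⟩, ?_⟩
  · rw [← exp_neg_arsinh]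
    exact ⟨exp_pos _, exp_lt_one_iff.2 (neg_lt_zero.2 (arsinh_pos_iff.2 hκ))⟩
  · have hbij := strictAntiOn_angularHalfHeight.bijOn_Ioi_Ioo
      continuous_angularHalfHeight.continuousOn tendsto_angularHalfHeight_atTop
    rw [angularHalfHeight_zero] at hbij
    exact hbij.congr fun κ hκ => (catenoidHalfHeight_eq_angularHalfHeight hκ).symm
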